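/- Let ρ : ℝ^d → ℝ be continuous and integrable with ρ(0) = 1, |ρ(t)| ≤ 1 for all t, and inf_t ρ(t) > −1. Let δ ∈ (0,1) and let ε > 0 be small enough that 1 − ρ(s) < δ for all s ∈ [−ε,ε]^d. Set I(u) = ∫_{[−ε,ε]^d} ( ∫_0^{ρ(t)} φ(u,u,y) dy ) dt. Then limsup_{u→∞} I(u) / [ 2 (2/(2−δ))^{1/2} (φ(u)/u) ∫_{[−ε,ε]^d} Φ̄( u ((1−ρ(t))/2)^{1/2} ) dt ] ≤ 1. -/

import Mathlib

open MeasureTheory Filter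

/-- The standard Gaussian density `φ(u) = (2π)^{-1/2} e^{-u²/2}`. -/
noncomputable def gaussDensity (u : ℝ) : ℝ := Real.exp (-u ^ 2 / 2) / Real.sqrt (2 * Real.pi)

/-- The standard Gaussian tail `Φ̄(u) = ∫_u^∞ φ(x) dx`. -/
noncomputable def gaussTail (u : ℝ) : ℝ := ∫ x in Set.Ici u, gaussDensity x

/-- The density at `(u,u)` of the centered bivariate Gaussian vector with unit variances
and correlation `y`: `φ(u,u,y) = exp(-u²/(1+y)) / (2π √(1-y²))`. -/
noncomputable def biGaussDensity (u y : ℝ) : ℝ :=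
  Real.exp (-u ^ 2 / (1 + y)) / (2 * Real.pi * Real.sqrt (1 - y ^ 2))

/-!
For `u ≥ 2/δ` the bound holds before taking the limsup, pointwise in `t`. Write
`G(y) = Φ̄(u √((1-y)/2))`; this is increasing in `y` with derivative
`G'(y) = φ(u √((1-y)/2)) · u / (4 √((1-y)/2))`, and completing the square in the exponent gives
`φ(u,u,y) = √2 e^{-u²(1-y)²/(4(1+y))} / √(1+y) · 2 (φ(u)/u) G'(y)`.
The prefactor is at most `√(2/(2-δ))`: trivially when `y ≥ 1-δ`, and when `y < 1-δ` because then
`u(1-y) ≥ 2` makes the exponential at most `e^{-1/2} ≤ 1/√2`. Integrating over `[0, ρ(t)]` yields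
`∫_0^{ρ(t)} φ(u,u,y) dy ≤ 2 √(2/(2-δ)) (φ(u)/u) (G(ρ(t)) - G(0))`, and `G(0) ≥ 0`.
-/

open Real Set intervalIntegral

lemma gaussDensity_nonneg (x : ℝ) : 0 ≤ gaussDensity x := by
  unfold gaussDensity; positivity

lemma continuous_gaussDensity : Continuous gaussDensity := by
  unfold gaussDensity; fun_prop

lemma integrable_gaussDensity : Integrable gaussDensity := by
  refine ((integrable_exp_neg_mul_sq (b := 1 / 2) (by norm_num)).div_const √(2 * π)).congr
    (.of_forall fun x => ?_)
  unfold gaussDensity; ring_nf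

lemma gaussTail_nonneg (x : ℝ) : 0 ≤ gaussTail x :=
  setIntegral_nonneg measurableSet_Ici fun y _ => gaussDensity_nonneg y

lemma gaussTail_eq_sub_integral (x : ℝ) :
    gaussTail x = gaussTail 0 - ∫ t in (0 : ℝ)..x, gaussDensity t := by
  rw [← integral_Ici_sub_Ici' integrable_gaussDensity.integrableOn
    integrable_gaussDensity.integrableOn, gaussTail, gaussTail]
  ring

lemma hasDerivAt_gaussTail (x : ℝ) : HasDerivAt gaussTail (-gaussDensity x) x := by
  have h := (integral_hasDerivAt_right (a := 0) (b := x)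
    integrable_gaussDensity.intervalIntegrable
    continuous_gaussDensity.aestronglyMeasurable.stronglyMeasurableAtFilter
    continuous_gaussDensity.continuousAt).const_sub (gaussTail 0)
  exact h.congr_of_eventuallyEq (.of_forall gaussTail_eq_sub_integral)

lemma continuous_gaussTail : Continuous gaussTail :=
  continuous_iff_continuousAt.mpr fun x => (hasDerivAt_gaussTail x).continuousAt

lemma hasDerivAt_gaussTail_mul_sqrt (u : ℝ) {y : ℝ} (hy : y < 1) :
    HasDerivAt (fun y => gaussTail (u * √((1 - y) / 2)))
      (gaussDensity (u * √((1 - y) / 2)) * (u / (4 * √((1 - y) / 2)))) y := by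
  have hpos : 0 < (1 - y) / 2 := by linarith
  refine ((hasDerivAt_gaussTail _).comp y (HasDerivAt.const_mul u
    ((((hasDerivAt_id y).const_sub 1).div_const 2).sqrt hpos.ne'))).congr_deriv ?_
  have := (sqrt_pos.mpr hpos).ne'
  simp only [id]
  field_simp
  ring

lemma biGaussDensity_nonneg (u y : ℝ) : 0 ≤ biGaussDensity u y := by
  unfold biGaussDensity; positivity

lemma integral_biGaussDensity_nonneg (u : ℝ) {r : ℝ} (hr : 0 ≤ r) :
    0 ≤ ∫ y in (0 : ℝ)..r, biGaussDensity u y :=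
  intervalIntegral.integral_nonneg hr fun y _ => biGaussDensity_nonneg u y

lemma biGaussDensity_eq_mul {u y : ℝ} (hu : u ≠ 0) (hy₀ : -1 < y) (hy₁ : y < 1) :
    biGaussDensity u y = √2 * exp (-(u ^ 2 * (1 - y) ^ 2 / (4 * (1 + y)))) / √(1 + y) *
      (2 * (gaussDensity u / u) *
        (gaussDensity (u * √((1 - y) / 2)) * (u / (4 * √((1 - y) / 2))))) := by
  have ha : 0 < √(1 - y) := sqrt_pos.mpr (by linarith)
  have hb : 0 < √(1 + y) := sqrt_pos.mpr (by linarith)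
  have hc : 0 < √2 := by positivity
  -- `1/(1+y) = 1/2 + (1-y)/4 + (1-y)²/(4(1+y))`
  have hexp : exp (-u ^ 2 / (1 + y)) = exp (-u ^ 2 / 2) *
      exp (-(u * √((1 - y) / 2)) ^ 2 / 2) * exp (-(u ^ 2 * (1 - y) ^ 2 / (4 * (1 + y)))) := by
    rw [← exp_add, ← exp_add, mul_pow, sq_sqrt (by linarith)]
    have : 1 + y ≠ 0 := by linarith
    congr 1
    field_simp
    ring
  have hsq : √(1 - y ^ 2) = √(1 - y) * √(1 + y) := by
    rw [← sqrt_mul (by linarith)]; ring_nf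
  rw [biGaussDensity, hexp, hsq, gaussDensity, gaussDensity, sqrt_div (by linarith),
    sqrt_mul zero_le_two]
  have h2 : √2 ^ 2 = 2 := sq_sqrt zero_le_two
  have hπ : √π ^ 2 = π := sq_sqrt pi_pos.le
  generalize √2 = c at *
  generalize √π = p at *
  field_simp
  rw [hπ]
  field_simp
  norm_num

lemma sqrt_two_mul_exp_neg_half_le_one : √2 * exp (-(1 / 2)) ≤ 1 := by
  rw [show -(1 / 2 : ℝ) = -1 / 2 by norm_num, exp_half, ← sqrt_mul zero_le_two, sqrt_le_one,
    exp_neg, ← div_eq_mul_inv, div_le_one (exp_pos 1)]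
  linarith [add_one_le_exp (1 : ℝ)]

lemma sqrt_two_sub_mul_exp_le_sqrt_one_add {δ u y : ℝ} (hδ : 0 < δ) (hu : 2 / δ ≤ u)
    (hy₀ : 0 ≤ y) (hy₁ : y ≤ 1) :
    √(2 - δ) * exp (-(u ^ 2 * (1 - y) ^ 2 / (4 * (1 + y)))) ≤ √(1 + y) := by
  have hexp_le_one : exp (-(u ^ 2 * (1 - y) ^ 2 / (4 * (1 + y)))) ≤ 1 :=
    exp_le_one_iff.mpr (neg_nonpos.mpr (by positivity))
  rcases le_or_gt (1 - δ) y with hy | hy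
  · calc √(2 - δ) * exp (-(u ^ 2 * (1 - y) ^ 2 / (4 * (1 + y)))) ≤ √(2 - δ) :=
          mul_le_of_le_one_right (sqrt_nonneg _) hexp_le_one
      _ ≤ √(1 + y) := sqrt_le_sqrt (by linarith)
  · have huy : 2 ≤ u * (1 - y) := by
      rw [div_le_iff₀ hδ] at hu
      nlinarith
    have hhalf : 1 / 2 ≤ u ^ 2 * (1 - y) ^ 2 / (4 * (1 + y)) := by
      rw [le_div_iff₀ (by linarith)]
      nlinarith
    calc √(2 - δ) * exp (-(u ^ 2 * (1 - y) ^ 2 / (4 * (1 + y)))) ≤ √2 * exp (-(1 / 2)) :=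
          mul_le_mul (sqrt_le_sqrt (by linarith)) (exp_le_exp.mpr (by linarith))
            (exp_pos _).le (sqrt_nonneg 2)
      _ ≤ 1 := sqrt_two_mul_exp_neg_half_le_one
      _ ≤ √(1 + y) := one_le_sqrt.mpr (by linarith)

lemma biGaussDensity_le {δ u y : ℝ} (hδ₀ : 0 < δ) (hδ₁ : δ < 2) (hu : 2 / δ ≤ u)
    (hy₀ : 0 ≤ y) (hy₁ : y ≤ 1) :
    biGaussDensity u y ≤ 2 * √(2 / (2 - δ)) * (gaussDensity u / u) *
      (gaussDensity (u * √((1 - y) / 2)) * (u / (4 * √((1 - y) / 2)))) := by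
  rcases hy₁.eq_or_lt with rfl | hy₁
  · -- both sides are junk zeros: a division by `√0 = 0`
    simp [biGaussDensity]
  have hu₀ : 0 < u := (div_pos two_pos hδ₀).trans_le hu
  have hfactor :
      √2 * exp (-(u ^ 2 * (1 - y) ^ 2 / (4 * (1 + y)))) / √(1 + y) ≤ √(2 / (2 - δ)) := by
    rw [sqrt_div zero_le_two, div_le_div_iff₀ (sqrt_pos.mpr (by linarith))
      (sqrt_pos.mpr (by linarith)), mul_assoc]
    exact mul_le_mul_of_nonneg_left
      (by linarith [sqrt_two_sub_mul_exp_le_sqrt_one_add hδ₀ hu hy₀ hy₁.le]) (sqrt_nonneg 2)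
  have := gaussDensity_nonneg u
  have := gaussDensity_nonneg (u * √((1 - y) / 2))
  calc biGaussDensity u y
      = √2 * exp (-(u ^ 2 * (1 - y) ^ 2 / (4 * (1 + y)))) / √(1 + y) *
          (2 * (gaussDensity u / u) *
            (gaussDensity (u * √((1 - y) / 2)) * (u / (4 * √((1 - y) / 2))))) :=
        biGaussDensity_eq_mul hu₀.ne' (by linarith) hy₁
    _ ≤ √(2 / (2 - δ)) * (2 * (gaussDensity u / u) *
          (gaussDensity (u * √((1 - y) / 2)) * (u / (4 * √((1 - y) / 2))))) := by
        gcongr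
    _ = _ := by ring

lemma integral_biGaussDensity_le {δ u r : ℝ} (hδ₀ : 0 < δ) (hδ₁ : δ < 1) (hu : 2 / δ ≤ u)
    (hr₀ : 1 - r < δ) (hr₁ : r ≤ 1) :
    ∫ y in (0 : ℝ)..r, biGaussDensity u y ≤
      2 * √(2 / (2 - δ)) * (gaussDensity u / u) * gaussTail (u * √((1 - r) / 2)) := by
  have hr : 0 ≤ r := by linarith
  set C := 2 * √(2 / (2 - δ)) * (gaussDensity u / u)
  set G := fun y => gaussTail (u * √((1 - y) / 2))
  set D := fun y => gaussDensity (u * √((1 - y) / 2)) * (u / (4 * √((1 - y) / 2)))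
  have hu₀ : 0 < u := (div_pos two_pos hδ₀).trans_le hu
  have hC : 0 ≤ C := by have := gaussDensity_nonneg u; positivity
  have hD : ∀ y, 0 ≤ D y := fun y => by
    have := gaussDensity_nonneg (u * √((1 - y) / 2))
    positivity
  have hGcont : ContinuousOn G (Icc 0 r) :=
    (continuous_gaussTail.comp (by fun_prop)).continuousOn
  have hGderiv : ∀ y ∈ Ioo 0 r, HasDerivAt G (D y) y := fun y hy =>
    hasDerivAt_gaussTail_mul_sqrt u (hy.2.trans_le hr₁)
  have hDint : IntervalIntegrable D volume 0 r :=
    (intervalIntegrable_iff_integrableOn_Ioc_of_le hr).mpr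
      (integrableOn_deriv_of_nonneg hGcont hGderiv fun y _ => hD y)
  calc ∫ y in (0 : ℝ)..r, biGaussDensity u y ≤ ∫ y in (0 : ℝ)..r, C * D y := by
        rw [integral_of_le hr, integral_of_le hr]
        refine integral_mono_of_nonneg (.of_forall fun y => biGaussDensity_nonneg u y)
          (hDint.const_mul C).1 ((ae_restrict_iff' measurableSet_Ioc).mpr (.of_forall ?_))
        exact fun y hy => biGaussDensity_le hδ₀ (by linarith) hu hy.1.le (hy.2.trans hr₁)
    _ = C * (G r - G 0) := by
        rw [intervalIntegral.integral_const_mul,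
          integral_eq_sub_of_hasDerivAt_of_le hr hGcont hGderiv hDint]
    _ ≤ C * G r := by
        gcongr
        exact sub_le_self _ (gaussTail_nonneg _)

lemma setIntegral_integral_biGaussDensity_le {X : Type*} [TopologicalSpace X]
    [MeasurableSpace X] [OpensMeasurableSpace X] [T2Space X]
    {μ : Measure X} [IsFiniteMeasureOnCompacts μ]
    {K : Set X} (hK : IsCompact K) {ρ : X → ℝ} (hρ : ContinuousOn ρ K)
    {δ u : ℝ} (hδ₀ : 0 < δ) (hδ₁ : δ < 1) (hu : 2 / δ ≤ u)
    (hρδ : ∀ t ∈ K, 1 - ρ t < δ) (hρ₁ : ∀ t ∈ K, ρ t ≤ 1) :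
    ∫ t in K, (∫ y in (0 : ℝ)..ρ t, biGaussDensity u y) ∂μ ≤
      2 * √(2 / (2 - δ)) * (gaussDensity u / u) *
        ∫ t in K, gaussTail (u * √((1 - ρ t) / 2)) ∂μ := by
  have hint : IntegrableOn (fun t => gaussTail (u * √((1 - ρ t) / 2))) K μ :=
    (continuous_gaussTail.comp_continuousOn (by fun_prop)).integrableOn_compact hK
  rw [← MeasureTheory.integral_const_mul]
  refine integral_mono_of_nonneg ?_ (hint.const_mul _) ?_
  · filter_upwards [ae_restrict_mem hK.measurableSet] with t ht
    exact integral_biGaussDensity_nonneg u (by linarith [hρδ t ht])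
  · filter_upwards [ae_restrict_mem hK.measurableSet] with t ht
    exact integral_biGaussDensity_le hδ₀ hδ₁ hu (hρδ t ht) (hρ₁ t ht)

lemma limsup_div_le_one {ι : Type*} {l : Filter ι} [l.NeBot] {f g : ι → ℝ}
    (hf : ∀ᶠ x in l, 0 ≤ f x) (hfg : ∀ᶠ x in l, f x ≤ g x) :
    limsup (fun x => f x / g x) l ≤ 1 := by
  have hg : ∀ᶠ x in l, 0 ≤ g x := by filter_upwards [hf, hfg] with x h₁ h₂ using h₁.trans h₂
  refine limsup_le_of_le (isCoboundedUnder_le_of_eventually_le l (x := 0) ?_) ?_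
  · filter_upwards [hf, hg] with x h₁ h₂ using div_nonneg h₁ h₂
  · filter_upwards [hfg, hg] with x h₁ h₂ using div_le_one_of_le₀ h₁ h₂

theorem limsup_bound_of_B_general
    {d : ℕ} (ρ : (Fin d → ℝ) → ℝ)
    (hρcont : Continuous ρ)
    (hρle : ∀ t, |ρ t| ≤ 1)
    (δ : ℝ) (hδ0 : 0 < δ) (hδ1 : δ < 1)
    (ε : ℝ)
    (hεδ : ∀ s ∈ Set.Icc (fun _ => -ε) ((fun _ => ε) : Fin d → ℝ), 1 - ρ s < δ)
    -- `I(u) = ∫_{[-ε,ε]^d} ∫_0^{ρ(t)} φ(u,u,y) dy dt`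
    (I : ℝ → ℝ)
    (hI : ∀ u, I u = ∫ t in Set.Icc (fun _ => -ε) ((fun _ => ε) : Fin d → ℝ),
      ∫ y in (0 : ℝ)..(ρ t), biGaussDensity u y) :
    Filter.limsup (fun u : ℝ =>
        I u / (2 * Real.sqrt (2 / (2 - δ)) * (gaussDensity u / u) *
          ∫ t in Set.Icc (fun _ => -ε) ((fun _ => ε) : Fin d → ℝ),
            gaussTail (u * Real.sqrt ((1 - ρ t) / 2))))
      atTop ≤ 1 := by
  have hρ₁ : ∀ t, ρ t ≤ 1 := fun t => (abs_le.mp (hρle t)).2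
  refine limsup_div_le_one (.of_forall fun u => ?_) ?_
  · rw [hI]
    exact setIntegral_nonneg measurableSet_Icc fun t ht =>
      integral_biGaussDensity_nonneg u (by linarith [hεδ t ht])
  · filter_upwards [eventually_ge_atTop (2 / δ)] with u hu
    rw [hI]
    exact setIntegral_integral_biGaussDensity_le isCompact_Icc hρcont.continuousOn hδ0 hδ1 hu
      hεδ fun t _ => hρ₁ t

theorem limsup_bound_of_B
    {d : ℕ} (hd : 0 < d) (ρ : (Fin d → ℝ) → ℝ)
    (hρcont : Continuous ρ) (hρint : Integrable ρ)
    (hρ0 : ρ 0 = 1) (hρle : ∀ t, |ρ t| ≤ 1)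
    -- `inf_t ρ(t) > -1`
    (hinf : ∃ m : ℝ, -1 < m ∧ ∀ t, m ≤ ρ t)
    (δ : ℝ) (hδ0 : 0 < δ) (hδ1 : δ < 1)
    (ε : ℝ) (hε : 0 < ε)
    (hεδ : ∀ s ∈ Set.Icc (fun _ => -ε) ((fun _ => ε) : Fin d → ℝ), 1 - ρ s < δ)
    -- `I(u) = ∫_{[-ε,ε]^d} ∫_0^{ρ(t)} φ(u,u,y) dy dt`
    (I : ℝ → ℝ)
    (hI : ∀ u, I u = ∫ t in Set.Icc (fun _ => -ε) ((fun _ => ε) : Fin d → ℝ),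
      ∫ y in (0 : ℝ)..(ρ t), biGaussDensity u y) :
    Filter.limsup (fun u : ℝ =>
        I u / (2 * Real.sqrt (2 / (2 - δ)) * (gaussDensity u / u) *
          ∫ t in Set.Icc (fun _ => -ε) ((fun _ => ε) : Fin d → ℝ),
            gaussTail (u * Real.sqrt ((1 - ρ t) / 2))))
      atTop ≤ 1 :=
  limsup_bound_of_B_general ρ hρcont hρle δ hδ0 hδ1 ε hεδ I hI
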